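/- arXiv:1905.11112 — 5 statements merged into one kernel-verified Lean document; each statement's English description precedes it below -/
import Mathlib

section
/- Let g(x) = (log x)² on (0,∞). For any 0 < δ < 1, define h_δ(x) = g(δ) + x·g'(e) for x ∈ [0,e] and h_δ(x) = g(δ) + e·g'(e) + g(x) - g(e) for x ∈ [e,∞), where g'(e) = 2/e. Then h_δ is concave and nonnegative on [0,∞), and h_δ(x) ≥ g(x) for all x ∈ [δ,∞). -/
/-! Up to the constant `g δ`, `h_δ` is `2x/e` on `(-∞, e]` and `1 + (log x)²` beyond `e`.
The two pieces have the same slope `2/e` at `e`, so the derivative is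
`2 log (max x e) / max x e`, which is antitone since `log y / y` decreases on `[e, ∞)`.
For the bound, below `1` we have `(log x)² ≤ (log δ)²`, and on `[1, e]`
`(log x)² ≤ log x ≤ x/e` by the tangent line of `log` at `e`. -/

open Real Set

lemma Real.log_le_div_exp_one {x : ℝ} (hx : 0 < x) : log x ≤ x / exp 1 := by
  have h := log_le_sub_one_of_pos (div_pos hx (exp_pos 1))
  rw [log_div hx.ne' (exp_pos 1).ne', log_exp] at h
  linarith

lemma Real.hasDerivAt_log_sq {x : ℝ} (hx : x ≠ 0) :
    HasDerivAt (fun y => log y ^ 2) (2 * log x / x) x :=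
  ((hasDerivAt_log hx).fun_pow 2).congr_deriv (by norm_num [div_eq_mul_inv])

lemma hasDerivAt_ite_le_of_eq {u v : ℝ → ℝ} {c d : ℝ} (hu : HasDerivAt u d c)
    (hv : HasDerivAt v d c) (huv : u c = v c) :
    HasDerivAt (fun x => if x ≤ c then u x else v x) d c := by
  have hleft : HasDerivWithinAt (fun x => if x ≤ c then u x else v x) d (Iic c) c :=
    hu.hasDerivWithinAt.congr (fun y hy => if_pos hy) (if_pos le_rfl)
  have hright : HasDerivWithinAt (fun x => if x ≤ c then u x else v x) d (Ici c) c := by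
    refine hv.hasDerivWithinAt.congr (fun y hy => ?_) (by simp [huv])
    rcases (mem_Ici.mp hy).eq_or_lt with rfl | hlt
    · simp [huv]
    · exact if_neg hlt.not_ge
  simpa [Iic_union_Ici] using hleft.union hright

noncomputable def logSqMajorant (x : ℝ) : ℝ :=
  if x ≤ exp 1 then x * (2 / exp 1) else 1 + log x ^ 2

lemma hasDerivAt_logSqMajorant (x : ℝ) :
    HasDerivAt logSqMajorant (2 * log (max x (exp 1)) / max x (exp 1)) x := by
  have he : 0 < exp 1 := exp_pos 1
  have hslope : 2 * log (exp 1) / exp 1 = 2 / exp 1 := by rw [log_exp, mul_one]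
  rcases lt_trichotomy x (exp 1) with hlt | rfl | hgt
  · rw [max_eq_right hlt.le, hslope]
    refine (hasDerivAt_mul_const _).congr_of_eventuallyEq ?_
    filter_upwards [Iio_mem_nhds hlt] with y hy
    exact if_pos hy.le
  · rw [max_self, hslope]
    refine hasDerivAt_ite_le_of_eq (hasDerivAt_mul_const _) ?_ ?_
    · simpa [hslope] using (hasDerivAt_log_sq he.ne').const_add 1
    · field_simp [log_exp]; norm_num
  · rw [max_eq_left hgt.le]
    refine ((hasDerivAt_log_sq (he.trans hgt).ne').const_add 1).congr_of_eventuallyEq ?_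
    filter_upwards [Ioi_mem_nhds hgt] with y hy
    exact if_neg hy.not_ge

lemma concaveOn_logSqMajorant : ConcaveOn ℝ univ logSqMajorant := by
  refine Antitone.concaveOn_univ_of_deriv
    (fun x => (hasDerivAt_logSqMajorant x).differentiableAt) fun a b hab => ?_
  rw [(hasDerivAt_logSqMajorant a).deriv, (hasDerivAt_logSqMajorant b).deriv,
    mul_div_assoc, mul_div_assoc]
  have := log_div_self_antitoneOn (le_max_right a (exp 1)) (le_max_right b (exp 1))
    (max_le_max_right _ hab)
  dsimp only at this
  linarith

lemma logSqMajorant_nonneg {x : ℝ} (hx : 0 ≤ x) : 0 ≤ logSqMajorant x := by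
  unfold logSqMajorant
  split_ifs <;> positivity

lemma sq_log_le_logSqMajorant {x : ℝ} (hx : 1 ≤ x) : log x ^ 2 ≤ logSqMajorant x := by
  unfold logSqMajorant
  split_ifs with hxe
  · have hlog_nonneg : 0 ≤ log x := log_nonneg hx
    have hlog_le_one : log x ≤ 1 := by
      simpa using log_le_log (by positivity) hxe
    have htangent := log_le_div_exp_one (zero_lt_one.trans_le hx)
    have hslope : x / exp 1 ≤ x * (2 / exp 1) := by
      rw [mul_div_assoc']
      gcongr
      linarith
    nlinarith
  · linarith

lemma sq_log_le_sq_log_of_le_of_le_one {δ x : ℝ} (hδ : 0 < δ) (hδx : δ ≤ x) (hx : x ≤ 1) :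
    log x ^ 2 ≤ log δ ^ 2 := by
  have hmono : log δ ≤ log x := log_le_log hδ hδx
  have hnonpos : log x ≤ 0 := log_nonpos (hδ.le.trans hδx) hx
  rw [← neg_sq (log δ)]
  exact sq_le_sq' (by linarith) (by linarith)

lemma sq_log_le_logSqMajorant_add_sq_log {δ x : ℝ} (hδ : 0 < δ) (hδx : δ ≤ x) :
    log x ^ 2 ≤ logSqMajorant x + log δ ^ 2 := by
  rcases le_total x 1 with hx | hx
  · have := logSqMajorant_nonneg (hδ.le.trans hδx)
    linarith [sq_log_le_sq_log_of_le_of_le_one hδ hδx hx]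
  · linarith [sq_log_le_logSqMajorant hx, sq_nonneg (log δ)]

theorem stmt_3 (δ : ℝ) (hδ : δ ∈ Set.Ioo (0:ℝ) 1)
    (g h : ℝ → ℝ)
    (hg : ∀ x, g x = (Real.log x)^2)
    (hh : ∀ x, h x = if x ≤ Real.exp 1 then g δ + x * (2 / Real.exp 1)
      else g δ + Real.exp 1 * (2 / Real.exp 1) + g x - g (Real.exp 1)) :
    ConcaveOn ℝ (Set.Ici (0:ℝ)) h ∧ (∀ x ∈ Set.Ici (0:ℝ), 0 ≤ h x) ∧
    ∀ x ∈ Set.Ici δ, g x ≤ h x := by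
  have h_eq : h = fun x => logSqMajorant x + log δ ^ 2 := by
    funext x
    rw [hh, logSqMajorant, hg, hg, hg, log_exp]
    split_ifs
    · ring
    · field_simp; ring
  subst h_eq
  refine ⟨?_, fun x hx => ?_, fun x hx => ?_⟩
  · exact (concaveOn_logSqMajorant.subset (subset_univ _) (convex_Ici 0)).add_const _
  · exact add_nonneg (logSqMajorant_nonneg hx) (sq_nonneg _)
  · rw [hg]
    exact sq_log_le_logSqMajorant_add_sq_log hδ.1 hx
end

section
/- Fix α ∈ (-1,1) and let g(x) = (4/(α-1)²)·(x^((α-1)/2) - 1)². For any 0 < δ < 1 and all x ≥ δ, one has g(x) ≤ [4·(δ^((α-1)/2) - 1)² / ((α-1)²·(δ-1)²)]·(x-1)². -/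
open Set

lemma convexOn_rpow_of_nonpos {β : ℝ} (hβ : β ≤ 0) :
    ConvexOn ℝ (Set.Ioi (0:ℝ)) (fun x : ℝ => x ^ β) := by
  have hint : interior (Set.Ioi (0:ℝ)) = Set.Ioi 0 := interior_Ioi
  refine convexOn_of_hasDerivWithinAt2_nonneg (convex_Ioi 0)
    (f' := fun x => β * x ^ (β - 1)) (f'' := fun x => β * ((β - 1) * x ^ (β - 2))) ?_ ?_ ?_ ?_
  · exact fun x hx =>
      (Real.continuousAt_rpow_const x β (Or.inl (ne_of_gt hx))).continuousWithinAt
  · intro x hx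
    rw [hint] at hx ⊢
    exact (Real.hasDerivAt_rpow_const (Or.inl (ne_of_gt hx))).hasDerivWithinAt
  · intro x hx
    rw [hint] at hx ⊢
    have h := (Real.hasDerivAt_rpow_const (p := β - 1) (Or.inl (ne_of_gt hx))).hasDerivWithinAt
      (s := Set.Ioi (0:ℝ))
    have e : β - 1 - 1 = β - 2 := by ring
    rw [← e]
    exact h.const_mul β
  · intro x hx
    rw [hint] at hx
    have h1 : (0:ℝ) ≤ β * (β - 1) := by nlinarith
    have h2 : (0:ℝ) ≤ x ^ (β - 2) := Real.rpow_nonneg (le_of_lt hx) _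
    calc (0:ℝ) ≤ β * (β - 1) * x ^ (β - 2) := mul_nonneg h1 h2
      _ = β * ((β - 1) * x ^ (β - 2)) := by ring

theorem stmt_5 (α : ℝ) (hα : α ∈ Set.Ioo (-1:ℝ) 1)
    (δ : ℝ) (hδ : δ ∈ Set.Ioo (0:ℝ) 1) :
    ∀ x : ℝ, δ ≤ x →
      (4 / (α - 1)^2) * (x ^ ((α - 1)/2) - 1)^2 ≤
        (4 * (δ ^ ((α - 1)/2) - 1)^2 / ((α - 1)^2 * (δ - 1)^2)) * (x - 1)^2 := by
  obtain ⟨hα1, hα2⟩ := hα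
  obtain ⟨hδ0, hδ1⟩ := hδ
  set β := (α - 1) / 2 with hβdef
  have hβ0 : β < 0 := by rw [hβdef]; linarith
  have hconv := convexOn_rpow_of_nonpos hβ0.le
  intro x hx
  have hx0 : 0 < x := lt_of_lt_of_le hδ0 hx
  have hαsq : (0:ℝ) < (α - 1)^2 := by nlinarith [mul_pos (show (0:ℝ) < 1 - α by linarith) (show (0:ℝ) < 1 - α by linarith)]
  have hδ1' : δ - 1 < 0 := by linarith
  -- slope at δ
  have hδβ : 1 ≤ δ ^ β :=
    Real.one_le_rpow_of_pos_of_le_one_of_nonpos hδ0 hδ1.le hβ0.le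
  have hsδ : (δ ^ β - 1) / (δ - 1) ≤ 0 :=
    div_nonpos_of_nonneg_of_nonpos (by linarith) hδ1'.le
  -- key inequality
  have key : (x ^ β - 1)^2 ≤ ((δ ^ β - 1) / (δ - 1))^2 * (x - 1)^2 := by
    rcases eq_or_ne x 1 with rfl | hx1
    · simp [Real.one_rpow]
    · have hmem1 : (1:ℝ) ∈ Set.Ioi (0:ℝ) := by norm_num
      have hmemδ : δ ∈ Set.Ioi (0:ℝ) := hδ0
      have hmemx : x ∈ Set.Ioi (0:ℝ) := hx0
      have hsec := hconv.secant_mono hmem1 hmemδ hmemx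
        (ne_of_lt hδ1) hx1 hx
      simp only [Real.one_rpow] at hsec
      -- hsec : (δ^β - 1)/(δ - 1) ≤ (x^β - 1)/(x - 1)
      have hsx : (x ^ β - 1) / (x - 1) ≤ 0 := by
        rcases lt_or_gt_of_ne hx1 with h | h
        · have : 1 ≤ x ^ β :=
            Real.one_le_rpow_of_pos_of_le_one_of_nonpos hx0 h.le hβ0.le
          exact div_nonpos_of_nonneg_of_nonpos (by linarith) (by linarith)
        · have : x ^ β ≤ 1 :=
            Real.rpow_le_one_of_one_le_of_nonpos h.le hβ0.le
          exact div_nonpos_of_nonpos_of_nonneg (by linarith) (by linarith)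
      have habs : |(x ^ β - 1) / (x - 1)| ≤ |(δ ^ β - 1) / (δ - 1)| := by
        rw [abs_of_nonpos hsx, abs_of_nonpos hsδ]; linarith
      have hsq : ((x ^ β - 1) / (x - 1))^2 ≤ ((δ ^ β - 1) / (δ - 1))^2 := by
        calc ((x ^ β - 1) / (x - 1))^2 = |(x ^ β - 1) / (x - 1)|^2 := (sq_abs _).symm
          _ ≤ |(δ ^ β - 1) / (δ - 1)|^2 := pow_le_pow_left₀ (abs_nonneg _) habs 2
          _ = ((δ ^ β - 1) / (δ - 1))^2 := sq_abs _
      have hxne : x - 1 ≠ 0 := sub_ne_zero.mpr hx1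
      have hrw : (x ^ β - 1)^2 = ((x ^ β - 1) / (x - 1))^2 * (x - 1)^2 := by
        field_simp
      rw [hrw]
      exact mul_le_mul_of_nonneg_right hsq (sq_nonneg _)
  have hδne : δ - 1 ≠ 0 := ne_of_lt hδ1'
  have hαne : α - 1 ≠ 0 := sub_ne_zero.mpr (ne_of_lt hα2)
  have heq : (4 * (δ ^ β - 1)^2 / ((α - 1)^2 * (δ - 1)^2)) * (x - 1)^2
      = (4 / (α - 1)^2) * (((δ ^ β - 1) / (δ - 1))^2 * (x - 1)^2) := by
    field_simp
  rw [heq]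
  exact mul_le_mul_of_nonneg_left key (by positivity)
end

section
/- Fix α ∈ (-1,1). The function d(x) = (x^((α-1)/2) - 1)/(1 - x), defined for x > 0, x ≠ 1, is nonincreasing on (0,1) ∪ (1,∞). Equivalently, for 0 < x < 1 its derivative satisfies d'(x) ≤ 0, since 1 - ((3-α)/2)·x^((α-1)/2) + ((1-α)/2)·x^((α-3)/2) ≥ 0 for all x > 0. -/
/-!
For `p ≤ 0` the power function `x ↦ x ^ p` is convex on `(0, ∞)`. With `p = (α - 1) / 2`, the
inequality `t(x) ≥ 0` is the tangent line of `x ↦ x ^ p` at `x` lying below the graph at `1`,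
and `d` is minus the slope of the chord from `1` to `x`, which is monotone by convexity.
-/

open Set

theorem convexOn_rpow_of_nonpos_s6 {p : ℝ} (hp : p ≤ 0) :
    ConvexOn ℝ (Ioi 0) fun x : ℝ ↦ x ^ p := by
  refine convexOn_of_hasDerivWithinAt2_nonneg (convex_Ioi 0)
    (f' := fun x ↦ p * x ^ (p - 1)) (f'' := fun x ↦ p * (p - 1) * x ^ (p - 2)) ?_ ?_ ?_ ?_
  · exact fun x hx ↦ (Real.continuousAt_rpow_const x p (.inl (ne_of_gt hx))).continuousWithinAt
  all_goals simp only [interior_Ioi]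
  · exact fun x hx ↦ (Real.hasDerivAt_rpow_const (.inl (ne_of_gt hx))).hasDerivWithinAt
  · intro x hx
    have h := ((Real.hasDerivAt_rpow_const (p := p - 1) (.inl (ne_of_gt hx))).const_mul p)
    rw [sub_sub, one_add_one_eq_two, ← mul_assoc] at h
    exact h.hasDerivWithinAt
  · intro x hx
    have : 0 ≤ p * (p - 1) := mul_nonneg_of_nonpos_of_nonpos hp (by linarith)
    exact mul_nonneg this (Real.rpow_nonneg hx.out.le _)

theorem ConvexOn.add_mul_sub_le_of_hasDerivAt {S : Set ℝ} {f : ℝ → ℝ} {x y f' : ℝ}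
    (hf : ConvexOn ℝ S f) (hx : x ∈ S) (hy : y ∈ S) (hf' : HasDerivAt f f' x) :
    f x + f' * (y - x) ≤ f y := by
  rcases lt_trichotomy x y with hxy | rfl | hyx
  · have h := hf.le_slope_of_hasDerivAt hx hy hxy hf'
    rw [slope_def_field, le_div_iff₀ (sub_pos.2 hxy)] at h
    linarith
  · simp
  · have h := hf.slope_le_of_hasDerivAt hy hx hyx hf'
    rw [slope_def_field, div_le_iff₀ (sub_pos.2 hyx)] at h
    linarith

theorem rpow_add_mul_rpow_sub_one_mul_le_one {p x : ℝ} (hp : p ≤ 0) (hx : 0 < x) :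
    x ^ p + p * x ^ (p - 1) * (1 - x) ≤ 1 := by
  simpa using (convexOn_rpow_of_nonpos_s6 hp).add_mul_sub_le_of_hasDerivAt hx
    (mem_Ioi.2 one_pos) (Real.hasDerivAt_rpow_const (.inl hx.ne'))

theorem stmt_6 (α : ℝ) (hα : α ∈ Set.Ioo (-1:ℝ) 1)
    (d : ℝ → ℝ) (hd : ∀ x, d x = (x ^ ((α - 1)/2) - 1) / (1 - x)) :
    (∀ x > (0:ℝ),
      0 ≤ 1 - ((3 - α)/2) * x ^ ((α - 1)/2) + ((1 - α)/2) * x ^ ((α - 3)/2)) ∧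
    AntitoneOn d (Set.Ioi (0:ℝ) \ {1}) := by
  have hp : (α - 1) / 2 ≤ 0 := by linarith [hα.2]
  refine ⟨fun x hx ↦ ?_, ?_⟩
  · have h := rpow_add_mul_rpow_sub_one_mul_le_one hp hx
    rw [show (α - 3) / 2 = (α - 1) / 2 - 1 by ring]
    rw [Real.rpow_sub_one hx.ne'] at h ⊢
    field_simp at h ⊢
    linarith
  · have hd_slope : d = fun y ↦ -slope (fun x : ℝ ↦ x ^ ((α - 1) / 2)) 1 y := by
      funext y
      rw [hd, slope_def_field, Real.one_rpow, ← neg_sub y 1, div_neg]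
    rw [hd_slope]
    exact ((convexOn_rpow_of_nonpos_s6 hp).slope_mono (mem_Ioi.2 one_pos)).neg
end

section
/- Fix β ∈ (1,∞) and let g(x) = (β/(1-β))²·[(1+x^(-β))^((1-β)/β) - 2^((1-β)/β)]² for x > 0. Then both limits L₀ := lim_{x→0⁺} g(x) and L∞ := lim_{x→∞} g(x) exist and are finite, and g(x) ≤ max(L₀, L∞) for all x > 0. -/
/-!
Write `t x = (1 + x ^ (-β)) ^ p` with `p = (1 - β) / β < 0`, so that
`g x = c * (t x - 2 ^ p) ^ 2`. For `x > 0` the base exceeds `1`, hence `t x ∈ [0, 1]`,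
with `t x → 0` as `x → 0⁺` (the base blows up) and `t x → 1` as `x → ∞`. A convex function
on `[0, 1]` is bounded by its values at the endpoints, and these are exactly the two
limits.
-/

open Real Filter Set Topology

lemma convexOn_const_mul_sub_sq {c : ℝ} (hc : 0 ≤ c) (a : ℝ) :
    ConvexOn ℝ univ fun t : ℝ => c * (t - a) ^ 2 := by
  simpa [sub_eq_add_neg] using ((even_two.convexOn_pow (𝕜 := ℝ)).translate_left (-a)).smul hc

section OneAddRpowNeg

variable {β p : ℝ}

lemma one_add_rpow_neg_rpow_mem_Icc (hp : p ≤ 0) {x : ℝ} (hx : 0 ≤ x) :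
    (1 + x ^ (-β)) ^ p ∈ Icc 0 1 := by
  have hbase : 1 ≤ 1 + x ^ (-β) := le_add_of_nonneg_right (rpow_nonneg hx _)
  exact ⟨rpow_nonneg (zero_le_one.trans hbase) _, rpow_le_one_of_one_le_of_nonpos hbase hp⟩

lemma tendsto_one_add_rpow_neg_rpow_nhdsGT_zero (hβ : 0 < β) (hp : p < 0) :
    Tendsto (fun x : ℝ => (1 + x ^ (-β)) ^ p) (𝓝[>] 0) (𝓝 0) := by
  have hbase : Tendsto (fun x : ℝ => 1 + x ^ (-β)) (𝓝[>] 0) atTop :=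
    tendsto_atTop_add_const_left _ 1 (tendsto_rpow_neg_nhdsGT_zero (neg_neg_iff_pos.2 hβ))
  simpa [Function.comp_def] using (tendsto_rpow_neg_atTop (neg_pos.2 hp)).comp hbase

lemma tendsto_one_add_rpow_neg_rpow_atTop (hβ : 0 < β) (p : ℝ) :
    Tendsto (fun x : ℝ => (1 + x ^ (-β)) ^ p) atTop (𝓝 1) := by
  have hbase : Tendsto (fun x : ℝ => 1 + x ^ (-β)) atTop (𝓝 1) := by
    simpa using (tendsto_rpow_neg_atTop hβ).const_add 1
  simpa [Function.comp_def] using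
    (continuousAt_rpow_const 1 p (Or.inl one_ne_zero)).tendsto.comp hbase

end OneAddRpowNeg

theorem stmt_9 (β : ℝ) (hβ : 1 < β)
    (g : ℝ → ℝ)
    (hg : ∀ x, g x = (β / (1 - β))^2 *
      ((1 + x ^ (-β)) ^ ((1 - β)/β) - 2 ^ ((1 - β)/β))^2) :
    ∃ L0 Linf : ℝ,
      Filter.Tendsto g (nhdsWithin 0 (Set.Ioi 0)) (nhds L0) ∧
      Filter.Tendsto g Filter.atTop (nhds Linf) ∧
      ∀ x > (0:ℝ), g x ≤ max L0 Linf := by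
  have hβ0 : 0 < β := zero_lt_one.trans hβ
  have hp : (1 - β) / β < 0 := div_neg_of_neg_of_pos (by linarith) hβ0
  set φ := fun t : ℝ => (β / (1 - β)) ^ 2 * (t - 2 ^ ((1 - β) / β)) ^ 2
  have hgφ : g = φ ∘ fun x => (1 + x ^ (-β)) ^ ((1 - β) / β) := funext hg
  have hφ : Continuous φ := by fun_prop
  refine ⟨φ 0, φ 1, ?_, ?_, fun x hx => ?_⟩
  · rw [hgφ]
    exact (hφ.tendsto 0).comp (tendsto_one_add_rpow_neg_rpow_nhdsGT_zero hβ0 hp)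
  · rw [hgφ]
    exact (hφ.tendsto 1).comp (tendsto_one_add_rpow_neg_rpow_atTop hβ0 _)
  · rw [hgφ]
    exact (convexOn_const_mul_sub_sq (sq_nonneg _) _).le_max_of_mem_Icc trivial trivial
      (one_add_rpow_neg_rpow_mem_Icc hp.le hx.le)
end

section
/- Let μ ∈ ℝᵈ and σ, β > 0 with 2β² > σ². Then the chi-squared divergence between the Gaussians N(μ, σ²I_d) and N(0, β²I_d) equals χ²(N(μ,σ²I_d), N(0,β²I_d)) = (β²/(σ²·√(2β²/σ² - 1)))ᵈ · exp(‖μ‖²/(2β² - σ²)) - 1. -/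
/-!
Squaring the density of `N(m, σ²I)` and dividing by that of `N(0, β²I)` leaves a constant times
`exp (-‖z - m‖² / σ² + ‖z‖² / (2β²))`. Because `1/σ² > 1/(2β²)`, completing the square writes this
exponent as `-a ‖z - c‖² + ‖m‖² / (2β² - σ²)` with `a = 1/σ² - 1/(2β²) > 0` and
`c = (2β² / (2β² - σ²)) • m`, so the integral is a translated Gaussian integral `(π / a) ^ (d / 2)`.
-/

open MeasureTheory Real

section
variable {E : Type*} [NormedAddCommGroup E] [InnerProductSpace ℝ E]

lemma neg_mul_norm_sub_sq_add_mul_norm_sq {u v : ℝ} (huv : u ≠ v) (x m : E) :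
    -u * ‖x - m‖ ^ 2 + v * ‖x‖ ^ 2 =
      -(u - v) * ‖x - (u / (u - v)) • m‖ ^ 2 + u * v / (u - v) * ‖m‖ ^ 2 := by
  have : u - v ≠ 0 := sub_ne_zero.mpr huv
  rw [norm_sub_sq_real, norm_sub_sq_real, real_inner_smul_right, norm_smul, mul_pow,
    Real.norm_eq_abs, sq_abs]
  field_simp
  ring

variable [FiniteDimensional ℝ E] [MeasurableSpace E] [BorelSpace E]

lemma integral_exp_neg_mul_norm_sub_sq {a : ℝ} (ha : 0 < a) (c : E) :
    ∫ x, exp (-a * ‖x - c‖ ^ 2) = (π / a) ^ (Module.finrank ℝ E / 2 : ℝ) :=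
  (integral_sub_right_eq_self (fun x ↦ exp (-a * ‖x‖ ^ 2)) c).trans
    (GaussianFourier.integral_rexp_neg_mul_sq_norm ha)

lemma integral_exp_neg_mul_norm_sub_sq_add_mul_norm_sq {u v : ℝ} (hvu : v < u) (m : E) :
    ∫ x, exp (-u * ‖x - m‖ ^ 2 + v * ‖x‖ ^ 2) =
      (π / (u - v)) ^ (Module.finrank ℝ E / 2 : ℝ) * exp (u * v / (u - v) * ‖m‖ ^ 2) := by
  simp_rw [neg_mul_norm_sub_sq_add_mul_norm_sq hvu.ne', exp_add]
  rw [integral_mul_const, integral_exp_neg_mul_norm_sub_sq (sub_pos.mpr hvu)]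

end

lemma pow_eq_sq_rpow_half {b : ℝ} (hb : 0 ≤ b) (n : ℕ) : b ^ n = (b ^ 2) ^ (n / 2 : ℝ) := by
  rw [← rpow_two, ← rpow_mul hb, ← rpow_natCast]
  ring_nf

lemma mul_exp_sq_div_mul_exp (A B x y : ℝ) :
    (A * exp x) ^ 2 / (B * exp y) = A ^ 2 / B * exp (2 * x - y) := by
  rw [mul_pow, ← exp_nat_mul, exp_sub]
  push_cast
  ring

lemma gaussian_chiSq_normalizer {σ β : ℝ} (hσ : 0 < σ) (hβ : 0 < β) (h : σ ^ 2 < 2 * β ^ 2)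
    (n : ℕ) :
    ((2 * π * σ ^ 2) ^ (-(n : ℝ) / 2)) ^ 2 / (2 * π * β ^ 2) ^ (-(n : ℝ) / 2) *
        (π / ((σ ^ 2)⁻¹ - (2 * β ^ 2)⁻¹)) ^ (n / 2 : ℝ) =
      (β ^ 2 / (σ ^ 2 * √(2 * β ^ 2 / σ ^ 2 - 1))) ^ n := by
  have hX : 0 ≤ 2 * π * σ ^ 2 := by positivity
  have hY : 0 ≤ 2 * π * β ^ 2 := by positivity
  have ha : 0 ≤ π / ((σ ^ 2)⁻¹ - (2 * β ^ 2)⁻¹) := by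
    have : (2 * β ^ 2)⁻¹ < (σ ^ 2)⁻¹ := inv_strictAnti₀ (by positivity) h
    exact div_nonneg pi_pos.le (sub_pos.mpr this).le
  have hs : 0 < 2 * β ^ 2 / σ ^ 2 - 1 := by
    rw [sub_pos, one_lt_div (by positivity)]; exact h
  rw [rpow_pow_comm hX, neg_div, rpow_neg (by positivity), rpow_neg hY, div_inv_eq_mul,
    ← inv_rpow (by positivity), ← mul_rpow (by positivity) hY, ← mul_rpow (by positivity) ha]
  conv_rhs => rw [pow_eq_sq_rpow_half (by positivity)]
  congr 1
  have hd : 2 * β ^ 2 - σ ^ 2 ≠ 0 := (sub_pos.mpr h).ne'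
  rw [div_pow, mul_pow (σ ^ 2), sq_sqrt hs.le]
  field_simp

theorem stmt_18 (d : ℕ) (m : EuclideanSpace ℝ (Fin d)) (σ β : ℝ)
    (hσ : 0 < σ) (hβ : 0 < β) (h : σ^2 < 2 * β^2)
    (pdf : EuclideanSpace ℝ (Fin d) → ℝ → EuclideanSpace ℝ (Fin d) → ℝ)
    (hpdf : ∀ c s z, pdf c s z =
      (2 * Real.pi * s^2) ^ (-(d:ℝ)/2) * Real.exp (-‖z - c‖^2 / (2 * s^2))) :
    (∫ z, (pdf m σ z)^2 / pdf 0 β z ∂volume) - 1 =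
      (β^2 / (σ^2 * Real.sqrt (2 * β^2 / σ^2 - 1)))^d *
        Real.exp (‖m‖^2 / (2 * β^2 - σ^2)) - 1 := by
  have hratio : ∀ z, pdf m σ z ^ 2 / pdf 0 β z =
      ((2 * π * σ ^ 2) ^ (-(d : ℝ) / 2)) ^ 2 / (2 * π * β ^ 2) ^ (-(d : ℝ) / 2) *
        exp (-(σ ^ 2)⁻¹ * ‖z - m‖ ^ 2 + (2 * β ^ 2)⁻¹ * ‖z‖ ^ 2) := by
    intro z
    rw [hpdf, hpdf, mul_exp_sq_div_mul_exp, sub_zero]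
    congr 2
    ring
  have hvu : (2 * β ^ 2)⁻¹ < (σ ^ 2)⁻¹ := inv_strictAnti₀ (by positivity) h
  have hexp : (σ ^ 2)⁻¹ * (2 * β ^ 2)⁻¹ / ((σ ^ 2)⁻¹ - (2 * β ^ 2)⁻¹) * ‖m‖ ^ 2 =
      ‖m‖ ^ 2 / (2 * β ^ 2 - σ ^ 2) := by
    have hd : 2 * β ^ 2 - σ ^ 2 ≠ 0 := (sub_pos.mpr h).ne'
    field_simp
  rw [integral_congr_ae (ae_of_all _ hratio), integral_const_mul,
    integral_exp_neg_mul_norm_sub_sq_add_mul_norm_sq hvu, finrank_euclideanSpace_fin, ← mul_assoc,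
    gaussian_chiSq_normalizer hσ hβ h, hexp]
end
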